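/- Fix an integer l ≥ 0 and reals g, h. For x > 0, let ψp(x) = P_l^{(-g-l-3/2, -h+l-1/2)}(cosh 2x) and ψm(x) = P_l^{(-g-l-1/2, -h+l-3/2)}(cosh 2x). Then -8l(h+g-l+1)·ψp·ψm + 2(1+2h-2l)·tanh x·ψp·ψm' + 2(1+2g+2l)·coth x·ψm·ψp' - 2·ψm'·ψp' = 0 for all x > 0. -/

import Mathlib

open Finset

/-- Generalized binomial coefficient `C(z, k) = z(z-1)⋯(z-k+1)/k!`. -/
noncomputable def genChoose (z : ℝ) (k : ℕ) : ℝ :=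
  (descPochhammer ℝ k).eval z / (Nat.factorial k)

/-- The Jacobi polynomial
`P_n^{(a,b)}(x) = ∑_{s=0}^n C(n+a, n-s) C(n+b, s) ((x-1)/2)^s ((x+1)/2)^{n-s}`. -/
noncomputable def jacobi (n : ℕ) (a b x : ℝ) : ℝ :=
  ∑ s ∈ range (n + 1),
    genChoose ((n : ℝ) + a) (n - s) * genChoose ((n : ℝ) + b) s *
      ((x - 1) / 2) ^ s * ((x + 1) / 2) ^ (n - s)

/-!
Write `P_n^{(a,b)}(y) = ∑ₛ cₛ uˢ vⁿ⁻ˢ` with `u = (y - 1)/2`, `v = (y + 1)/2`. Then `P'` is a form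
of degree `n - 1`, and multiplying it by `y + 1 = 2v` or by `y - 1 = 2u` and comparing coefficients
(Pascal's rule and the absorption identities for generalized binomials) gives the contiguous
relations `(y + 1) P'^{(a,b)} = (n + b) P^{(a+1,b-1)} - b P^{(a,b)}` and
`(y - 1) P'^{(a,b)} = (n + a) P^{(a-1,b+1)} - a P^{(a,b)}`.
`ψp` and `ψm` are related by exactly these shifts. With `y = cosh 2x` we have
`dy/dx = 2 sinh 2x`, `tanh x · sinh 2x = y - 1`, `coth x · sinh 2x = y + 1` and
`sinh² 2x = y² - 1`, so the claimed identity becomes a linear combination of the two relations.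
-/

open Polynomial Real

lemma descPochhammer_succ_eval_left (k : ℕ) (z : ℝ) :
    (descPochhammer ℝ (k + 1)).eval z = z * (descPochhammer ℝ k).eval (z - 1) := by
  simp [descPochhammer_succ_left, eval_comp]

@[simp] lemma genChoose_zero (z : ℝ) : genChoose z 0 = 1 := by simp [genChoose]

lemma succ_mul_genChoose_succ (z : ℝ) (k : ℕ) :
    ((k : ℝ) + 1) * genChoose z (k + 1) = (z - k) * genChoose z k := by
  rw [genChoose, genChoose, descPochhammer_succ_eval, Nat.factorial_succ]
  push_cast
  field_simp

lemma genChoose_add_one_succ (z : ℝ) (k : ℕ) :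
    genChoose (z + 1) (k + 1) = genChoose z (k + 1) + genChoose z k := by
  rw [genChoose, genChoose, genChoose, descPochhammer_succ_eval_left, add_sub_cancel_right,
    descPochhammer_succ_eval, Nat.factorial_succ]
  push_cast
  field_simp
  ring

lemma sub_mul_genChoose (z : ℝ) (k : ℕ) :
    (z - k) * genChoose z k = z * genChoose (z - 1) k := by
  rw [genChoose, genChoose, ← mul_div_assoc, ← mul_div_assoc, mul_comm,
    ← descPochhammer_succ_eval, descPochhammer_succ_eval_left]

lemma cast_add_mul_genChoose_add_sub_one (n : ℕ) (b : ℝ) :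
    (n + b) * genChoose (n + (b - 1)) n = b * genChoose (n + b) n := by
  rw [← add_sub_assoc, ← sub_mul_genChoose, add_sub_cancel_left]

noncomputable def binaryForm (n : ℕ) (c : ℕ → ℝ) (y : ℝ) : ℝ :=
  ∑ s ∈ range (n + 1), c s * ((y - 1) / 2) ^ s * ((y + 1) / 2) ^ (n - s)

section binaryForm

variable (n : ℕ) (c : ℕ → ℝ) (y : ℝ)

lemma binaryForm_congr {c' : ℕ → ℝ} (h : ∀ s ≤ n, c s = c' s) :
    binaryForm n c y = binaryForm n c' y :=
  sum_congr rfl fun s hs => by rw [h s (Nat.lt_succ_iff.mp (mem_range.mp hs))]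

lemma binaryForm_mul_sub_mul (α β : ℝ) (c' : ℕ → ℝ) :
    binaryForm n (fun s => α * c s - β * c' s) y
      = α * binaryForm n c y - β * binaryForm n c' y := by
  simp only [binaryForm, mul_sum, ← sum_sub_distrib]
  exact sum_congr rfl fun _ _ => by ring

lemma binaryForm_succ :
    binaryForm (n + 1) c y
      = (y + 1) / 2 * binaryForm n c y + c (n + 1) * ((y - 1) / 2) ^ (n + 1) := by
  rw [binaryForm, sum_range_succ, binaryForm, mul_sum, Nat.sub_self, pow_zero, mul_one]
  congr 1
  refine sum_congr rfl fun s hs => ?_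
  rw [Nat.succ_sub (Nat.lt_succ_iff.mp (mem_range.mp hs)), pow_succ]
  ring

lemma binaryForm_succ' :
    binaryForm (n + 1) c y
      = c 0 * ((y + 1) / 2) ^ (n + 1) + (y - 1) / 2 * binaryForm n (fun s => c (s + 1)) y := by
  rw [binaryForm, sum_range_succ', binaryForm, mul_sum, add_comm]
  simp only [pow_zero, mul_one, Nat.sub_zero, Nat.add_sub_add_right, pow_succ]
  congr 1
  exact sum_congr rfl fun _ _ => by ring

/-- With `u = (y - 1)/2`, `v = (y + 1)/2` the derivative is `(∂ᵤ + ∂ᵥ)/2`; the coefficient of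
`uˢ vⁿ⁻ˢ` collects `∂ᵤ` of the term `s + 1` and `∂ᵥ` of the term `s`. -/
lemma hasDerivAt_binaryForm_succ :
    HasDerivAt (binaryForm (n + 1) c)
      (binaryForm n (fun s => ((s : ℝ) + 1) * c (s + 1) + ((n : ℝ) + 1 - s) * c s) y / 2) y := by
  set u := (y - 1) / 2
  set v := (y + 1) / 2
  have hterm : ∀ s, HasDerivAt (fun y => c s * ((y - 1) / 2) ^ s * ((y + 1) / 2) ^ (n + 1 - s))
      (c s * (s * u ^ (s - 1) * v ^ (n + 1 - s) + ((n + 1 - s : ℕ) : ℝ) * u ^ s * v ^ (n - s)) / 2)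
      y := fun s => by
    have hu := (((hasDerivAt_id y).sub_const 1).div_const 2).fun_pow s
    have hv := (((hasDerivAt_id y).add_const 1).div_const 2).fun_pow (n + 1 - s)
    refine ((hu.const_mul (c s)).mul hv).congr_deriv ?_
    rw [show n + 1 - s - 1 = n - s by omega]
    simp only [id, one_div]
    ring
  refine (HasDerivAt.fun_sum (u := range (n + 1 + 1)) fun s _ => hterm s).congr_deriv ?_
  rw [← sum_div, sum_congr rfl fun s _ => mul_add (c s) _ _, sum_add_distrib, sum_range_succ',
    sum_range_succ _ (n + 1)]
  simp only [Nat.sub_self, Nat.cast_zero, zero_mul, mul_zero, add_zero, ← sum_add_distrib]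
  congr 1
  refine sum_congr rfl fun s hmem => ?_
  have hs : s ≤ n + 1 := (Nat.lt_succ_iff.mp (mem_range.mp hmem)).trans n.le_succ
  rw [Nat.add_sub_add_right, Nat.sub_zero, Nat.cast_sub hs]
  push_cast
  ring

end binaryForm

noncomputable def jacobiCoeff (n : ℕ) (a b : ℝ) (s : ℕ) : ℝ :=
  genChoose (n + a) (n - s) * genChoose (n + b) s

section jacobi

variable (n : ℕ) (a b : ℝ)

lemma jacobi_eq_binaryForm : jacobi n a b = binaryForm n (jacobiCoeff n a b) := rfl

lemma jacobi_zero : jacobi 0 a b = fun _ => 1 := by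
  ext
  simp [jacobi]

lemma differentiable_jacobi : Differentiable ℝ (jacobi n a b) := by
  unfold jacobi
  fun_prop

lemma jacobiCoeff_add_one_sub_one_self :
    (n + b) * jacobiCoeff n (a + 1) (b - 1) n - b * jacobiCoeff n a b n = 0 := by
  simp only [jacobiCoeff, Nat.sub_self, genChoose_zero, one_mul,
    cast_add_mul_genChoose_add_sub_one, sub_self]

lemma jacobiCoeff_sub_one_add_one_zero :
    (n + a) * jacobiCoeff n (a - 1) (b + 1) 0 - a * jacobiCoeff n a b 0 = 0 := by
  simp only [jacobiCoeff, Nat.sub_zero, genChoose_zero, mul_one,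
    cast_add_mul_genChoose_add_sub_one, sub_self]

variable {n} {t : ℕ}

lemma jacobiCoeff_add_one_sub_one (ht : t < n) :
    ((t : ℝ) + 1) * jacobiCoeff n a b (t + 1) + ((n : ℝ) - t) * jacobiCoeff n a b t
      = (n + b) * jacobiCoeff n (a + 1) (b - 1) t - b * jacobiCoeff n a b t := by
  obtain ⟨j, rfl⟩ : ∃ j, n = j + t + 1 := ⟨n - t - 1, by omega⟩
  simp only [jacobiCoeff, show j + t + 1 - t = j + 1 by omega,
    show j + t + 1 - (t + 1) = j by omega]
  push_cast
  simp only [← add_assoc, add_sub_assoc']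
  generalize (j : ℝ) + t + 1 + a = z
  generalize hw : (j : ℝ) + t + 1 + b = w
  linear_combination genChoose z j * succ_mul_genChoose_succ w t
    - w * genChoose (w - 1) t * genChoose_add_one_succ z j
    + (genChoose z (j + 1) + genChoose z j) * sub_mul_genChoose w t
    + (genChoose z (j + 1) * genChoose w t) * hw

lemma jacobiCoeff_sub_one_add_one (ht : t < n) :
    ((t : ℝ) + 1) * jacobiCoeff n a b (t + 1) + ((n : ℝ) - t) * jacobiCoeff n a b t
      = (n + a) * jacobiCoeff n (a - 1) (b + 1) (t + 1) - a * jacobiCoeff n a b (t + 1) := by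
  obtain ⟨j, rfl⟩ : ∃ j, n = j + t + 1 := ⟨n - t - 1, by omega⟩
  simp only [jacobiCoeff, show j + t + 1 - t = j + 1 by omega,
    show j + t + 1 - (t + 1) = j by omega]
  push_cast
  simp only [← add_assoc, add_sub_assoc']
  generalize hz : (j : ℝ) + t + 1 + a = z
  generalize (j : ℝ) + t + 1 + b = w
  linear_combination genChoose w t * succ_mul_genChoose_succ z j
    - z * genChoose (z - 1) j * genChoose_add_one_succ w t
    + (genChoose w (t + 1) + genChoose w t) * sub_mul_genChoose z j
    + (genChoose z j * genChoose w (t + 1)) * hz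

variable (n) (y : ℝ)

theorem add_one_mul_deriv_jacobi :
    (y + 1) * deriv (jacobi n a b) y
      = (n + b) * jacobi n (a + 1) (b - 1) y - b * jacobi n a b y := by
  cases n with
  | zero => simp [jacobi_zero]
  | succ m =>
    simp only [jacobi_eq_binaryForm]
    rw [(hasDerivAt_binaryForm_succ m _ y).deriv, ← binaryForm_mul_sub_mul, binaryForm_succ,
      jacobiCoeff_add_one_sub_one_self, zero_mul, add_zero]
    push_cast
    rw [binaryForm_congr m _ y fun s hs => by
      simpa using jacobiCoeff_add_one_sub_one a b (Nat.lt_succ_of_le hs)]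
    ring

theorem sub_one_mul_deriv_jacobi :
    (y - 1) * deriv (jacobi n a b) y
      = (n + a) * jacobi n (a - 1) (b + 1) y - a * jacobi n a b y := by
  cases n with
  | zero => simp [jacobi_zero]
  | succ m =>
    simp only [jacobi_eq_binaryForm]
    rw [(hasDerivAt_binaryForm_succ m _ y).deriv, ← binaryForm_mul_sub_mul, binaryForm_succ',
      jacobiCoeff_sub_one_add_one_zero, zero_mul, zero_add]
    push_cast
    rw [binaryForm_congr m _ y fun s hs => by
      simpa using jacobiCoeff_sub_one_add_one a b (Nat.lt_succ_of_le hs)]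
    ring

end jacobi

lemma hasDerivAt_comp_cosh_two_mul {f : ℝ → ℝ} (hf : Differentiable ℝ f) (x : ℝ) :
    HasDerivAt (fun x => f (cosh (2 * x))) (deriv f (cosh (2 * x)) * (2 * sinh (2 * x))) x := by
  have h := ((hasDerivAt_id x).const_mul 2).cosh
  simp only [id, mul_one] at h
  exact (hf _).hasDerivAt.comp x (h.congr_deriv (mul_comm _ _))

lemma tanh_mul_sinh_two_mul (x : ℝ) : tanh x * sinh (2 * x) = cosh (2 * x) - 1 := by
  rw [tanh_eq_sinh_div_cosh, sinh_two_mul, cosh_two_mul]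
  field_simp
  linear_combination -cosh_sq x

lemma cosh_div_sinh_mul_sinh_two_mul {x : ℝ} (hx : x ≠ 0) :
    cosh x / sinh x * sinh (2 * x) = cosh (2 * x) + 1 := by
  have : sinh x ≠ 0 := sinh_ne_zero.mpr hx
  rw [sinh_two_mul, cosh_two_mul]
  field_simp
  linear_combination cosh_sq x

/-- The new Jacobi polynomial relation (cc12HPT) for the extended
hyperbolic Darboux–Pöschl–Teller potential. -/
theorem jacobi_hypDPT_compatibility (l : ℕ) (g h : ℝ)
    (ψp ψm : ℝ → ℝ)
    (hψp : ∀ x, ψp x = jacobi l (-g - l - 3/2) (-h + l - 1/2) (Real.cosh (2 * x)))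
    (hψm : ∀ x, ψm x = jacobi l (-g - l - 1/2) (-h + l - 3/2) (Real.cosh (2 * x))) :
    ∀ x : ℝ, 0 < x →
      -8 * l * (h + g - l + 1) * ψp x * ψm x
        + 2 * (1 + 2 * h - 2 * l) * Real.tanh x * ψp x * deriv ψm x
        + 2 * (1 + 2 * g + 2 * l) * (Real.cosh x / Real.sinh x) * ψm x * deriv ψp x
        - 2 * deriv ψm x * deriv ψp x = 0 := by
  intro x hx
  rw [funext hψp, funext hψm,
    (hasDerivAt_comp_cosh_two_mul (differentiable_jacobi _ _ _) x).deriv,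
    (hasDerivAt_comp_cosh_two_mul (differentiable_jacobi _ _ _) x).deriv]
  have hp := add_one_mul_deriv_jacobi l (-g - l - 3/2) (-h + l - 1/2) (cosh (2 * x))
  have hm := sub_one_mul_deriv_jacobi l (-g - l - 1/2) (-h + l - 3/2) (cosh (2 * x))
  rw [show -g - l - 3/2 + 1 = -g - l - 1/2 by ring, show -h + l - 1/2 - 1 = -h + l - 3/2 by ring]
    at hp
  rw [show -g - l - 1/2 - 1 = -g - l - 3/2 by ring, show -h + l - 3/2 + 1 = -h + l - 1/2 by ring]
    at hm
  set y := cosh (2 * x)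
  set P₁ := jacobi l (-g - l - 3/2) (-h + l - 1/2) y
  set P₂ := jacobi l (-g - l - 1/2) (-h + l - 3/2) y
  set D₁ := deriv (jacobi l (-g - l - 3/2) (-h + l - 1/2)) y
  set D₂ := deriv (jacobi l (-g - l - 1/2) (-h + l - 3/2)) y
  linear_combination
    4 * (1 + 2 * h - 2 * l) * P₁ * D₂ * tanh_mul_sinh_two_mul x
      + 4 * (1 + 2 * g + 2 * l) * P₂ * D₁ * cosh_div_sinh_mul_sinh_two_mul hx.ne'
      + 8 * D₁ * D₂ * cosh_sq (2 * x)
      + (4 * (1 + 2 * g + 2 * l) * P₂ - 8 * (y - 1) * D₂) * hp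
      + (4 * (1 + 2 * h - 2 * l) * P₁ - 8 * ((l + (-h + l - 1/2)) * P₂ - (-h + l - 1/2) * P₁)) * hm
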